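/- Let g(x) be the upper-triangular 3×3 matrix with 1's on the diagonal, g₁₂ = q₁(x), g₂₃ = q₂(x), g₁₃ = c(x) where c = q₁q₂ − q₁² − q₁', and let Ũ₁ = q̃₁ − J̃ with q̃₁ having only entries (q̃₁)₁₃ = 6(R − Q'), (q̃₁)₂₃ = 6Q, and J̃ having entries J̃₁₃ = λ³, J̃₂₁ = J̃₃₂ = 1. Suppose 6Q = −q₁' − q₂' − q₁² − q₂² + q₁q₂ and 6R = q₁q₂(q₁ − q₂) + q₁'q₂ − 2q₂q₂' − q₂''. Then g⁻¹ Ũ₁ g + g⁻¹ g' = q₂ − J̃, where q₂ = diag(q₁, q₂ − q₁, −q₂). -/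

import Mathlib

open Matrix

theorem stmt5 (Q R q₁ q₂ : ℝ → ℂ) (lam : ℂ)
    (hq₁ : ContDiff ℝ (⊤ : ℕ∞) q₁) (hq₂ : ContDiff ℝ (⊤ : ℕ∞) q₂)
    (c : ℝ → ℂ)
    (hc : ∀ x, c x = q₁ x * q₂ x - q₁ x ^ 2 - deriv q₁ x)
    (g : ℝ → Matrix (Fin 3) (Fin 3) ℂ)
    (hg : ∀ x, g x = Matrix.of ![![1, q₁ x, c x], ![0, 1, q₂ x], ![0, 0, 1]])
    (gd : ℝ → Matrix (Fin 3) (Fin 3) ℂ)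
    (hgd : ∀ x i j, gd x i j = deriv (fun y => g y i j) x)
    (U₁ : ℝ → Matrix (Fin 3) (Fin 3) ℂ)
    (hU₁ : ∀ x, U₁ x =
      Matrix.of ![![0, 0, 6 * (R x - deriv Q x)], ![0, 0, 6 * Q x], ![0, 0, 0]]
      - Matrix.of ![![0, 0, lam ^ 3], ![1, 0, 0], ![0, 1, 0]])
    (hQ : ∀ x, 6 * Q x =
      -deriv q₁ x - deriv q₂ x - q₁ x ^ 2 - q₂ x ^ 2 + q₁ x * q₂ x)
    (hR : ∀ x, 6 * R x =
      q₁ x * q₂ x * (q₁ x - q₂ x) + deriv q₁ x * q₂ x - 2 * q₂ x * deriv q₂ x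
      - deriv (deriv q₂) x) :
    ∀ x, (g x)⁻¹ * U₁ x * g x + (g x)⁻¹ * gd x
      = Matrix.diagonal ![q₁ x, q₂ x - q₁ x, -q₂ x]
        - Matrix.of ![![0, 0, lam ^ 3], ![1, 0, 0], ![0, 1, 0]] := by
  -- differentiability facts
  have hd1 : Differentiable ℝ q₁ := hq₁.differentiable (by simp)
  have hd2 : Differentiable ℝ q₂ := hq₂.differentiable (by simp)
  have hq₁' : ContDiff ℝ ((⊤:ℕ∞):WithTop ℕ∞) q₁ := hq₁.of_le (by simp)
  have hq₂' : ContDiff ℝ ((⊤:ℕ∞):WithTop ℕ∞) q₂ := hq₂.of_le (by simp)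
  have hd1' : Differentiable ℝ (deriv q₁) :=
    (hq₁'.iterate_deriv 1).differentiable (by simp)
  have hd2' : Differentiable ℝ (deriv q₂) :=
    (hq₂'.iterate_deriv 1).differentiable (by simp)
  intro x
  have h1 : HasDerivAt q₁ (deriv q₁ x) x := (hd1 x).hasDerivAt
  have h2 : HasDerivAt q₂ (deriv q₂ x) x := (hd2 x).hasDerivAt
  have h1' : HasDerivAt (deriv q₁) (deriv (deriv q₁) x) x := (hd1' x).hasDerivAt
  have h2' : HasDerivAt (deriv q₂) (deriv (deriv q₂) x) x := (hd2' x).hasDerivAt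
  -- deriv of c
  have hcfun : c = fun y => q₁ y * q₂ y - q₁ y ^ 2 - deriv q₁ y := funext hc
  have hcd : deriv c x = deriv q₁ x * q₂ x + q₁ x * deriv q₂ x
      - 2 * q₁ x * deriv q₁ x - deriv (deriv q₁) x := by
    have hh : HasDerivAt c (deriv q₁ x * q₂ x + q₁ x * deriv q₂ x
        - 2 * q₁ x * deriv q₁ x - deriv (deriv q₁) x) x := by
      rw [hcfun, show (fun y => q₁ y * q₂ y - q₁ y ^ 2 - deriv q₁ y)
        = fun y => q₁ y * q₂ y - q₁ y * q₁ y - deriv q₁ y from funext fun y => by ring]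
      have := ((h1.mul h2).sub (h1.mul h1)).sub h1'
      exact this.congr_deriv (by ring)
    exact hh.deriv
  -- deriv of Q
  have hQfun : Q = fun y => (-deriv q₁ y - deriv q₂ y - q₁ y ^ 2 - q₂ y ^ 2
      + q₁ y * q₂ y) / 6 := by
    funext y
    have := hQ y
    field_simp
    linear_combination this
  have hQd : 6 * deriv Q x = -deriv (deriv q₁) x - deriv (deriv q₂) x
      - 2 * q₁ x * deriv q₁ x - 2 * q₂ x * deriv q₂ x
      + deriv q₁ x * q₂ x + q₁ x * deriv q₂ x := by
    have hh : HasDerivAt Q ((-deriv (deriv q₁) x - deriv (deriv q₂) x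
        - 2 * q₁ x * deriv q₁ x - 2 * q₂ x * deriv q₂ x
        + deriv q₁ x * q₂ x + q₁ x * deriv q₂ x) / 6) x := by
      rw [hQfun, show (fun y => (-deriv q₁ y - deriv q₂ y - q₁ y ^ 2 - q₂ y ^ 2
          + q₁ y * q₂ y) / 6)
        = fun y => (-deriv q₁ y - deriv q₂ y - q₁ y * q₁ y - q₂ y * q₂ y
          + q₁ y * q₂ y) / 6 from funext fun y => by ring]
      have := (((((h1'.neg.sub h2').sub (h1.mul h1)).sub (h2.mul h2)).add
        (h1.mul h2)).div_const 6)
      exact this.congr_deriv (by ring)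
    rw [hh.deriv]
    ring
  have key : ∀ (i j : Fin 3) (f : ℝ → ℂ), (∀ y, g y i j = f y) → gd x i j = deriv f x := by
    intro i j f h
    rw [hgd]
    congr 1
    funext y
    exact h y
  have hgdmat : gd x = Matrix.of ![![0, deriv q₁ x, deriv c x],
      ![0, 0, deriv q₂ x], ![0, 0, 0]] := by
    ext i j
    fin_cases i <;> fin_cases j
    · rw [key _ _ (fun _ => (1:ℂ)) (fun y => by simp [hg, Matrix.vecHead, Matrix.vecTail]), deriv_const]; simp [Matrix.vecHead, Matrix.vecTail]
    · rw [key _ _ q₁ (fun y => by simp [hg, Matrix.vecHead, Matrix.vecTail])]; simp [Matrix.vecHead, Matrix.vecTail]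
    · rw [key _ _ c (fun y => by simp [hg, Matrix.vecHead, Matrix.vecTail])]; simp [Matrix.vecHead, Matrix.vecTail]
    · rw [key _ _ (fun _ => (0:ℂ)) (fun y => by simp [hg, Matrix.vecHead, Matrix.vecTail]), deriv_const]; simp [Matrix.vecHead, Matrix.vecTail]
    · rw [key _ _ (fun _ => (1:ℂ)) (fun y => by simp [hg, Matrix.vecHead, Matrix.vecTail]), deriv_const]; simp [Matrix.vecHead, Matrix.vecTail]
    · rw [key _ _ q₂ (fun y => by simp [hg, Matrix.vecHead, Matrix.vecTail])]; simp [Matrix.vecHead, Matrix.vecTail]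
    · rw [key _ _ (fun _ => (0:ℂ)) (fun y => by simp [hg, Matrix.vecHead, Matrix.vecTail]), deriv_const]; simp [Matrix.vecHead, Matrix.vecTail]
    · rw [key _ _ (fun _ => (0:ℂ)) (fun y => by simp [hg, Matrix.vecHead, Matrix.vecTail]), deriv_const]; simp [Matrix.vecHead, Matrix.vecTail]
    · rw [key _ _ (fun _ => (1:ℂ)) (fun y => by simp [hg, Matrix.vecHead, Matrix.vecTail]), deriv_const]; simp [Matrix.vecHead, Matrix.vecTail]
  -- inverse of g
  have hginv : (g x)⁻¹ = Matrix.of ![![1, -q₁ x, q₁ x * q₂ x - c x],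
      ![0, 1, -q₂ x], ![0, 0, 1]] := by
    apply Matrix.inv_eq_left_inv
    rw [hg]
    ext i j
    fin_cases i <;> fin_cases j <;>
      simp [Matrix.mul_apply, Fin.sum_univ_three, Matrix.one_apply,
        Matrix.vecHead, Matrix.vecTail, Function.comp] <;> ring
  have hcx' : c x = q₁ x * q₂ x - q₁ x ^ 2 - deriv q₁ x := hc x
  have hcdx' : deriv c x = deriv q₁ x * q₂ x + q₁ x * deriv q₂ x
      - 2 * q₁ x * deriv q₁ x - deriv (deriv q₁) x := hcd
  have hQx' : Q x = (-deriv q₁ x - deriv q₂ x - q₁ x ^ 2 - q₂ x ^ 2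
      + q₁ x * q₂ x) / 6 := by
    have := hQ x; field_simp; linear_combination this
  have hQdx' : deriv Q x = (-deriv (deriv q₁) x - deriv (deriv q₂) x
      - 2 * q₁ x * deriv q₁ x - 2 * q₂ x * deriv q₂ x
      + deriv q₁ x * q₂ x + q₁ x * deriv q₂ x) / 6 := by
    have := hQd; field_simp; linear_combination this
  have hRx' : R x = (q₁ x * q₂ x * (q₁ x - q₂ x) + deriv q₁ x * q₂ x
      - 2 * q₂ x * deriv q₂ x - deriv (deriv q₂) x) / 6 := by
    have := hR x; field_simp; linear_combination this
  rw [hginv, hgdmat, hU₁, hg]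
  ext i j
  fin_cases i <;> fin_cases j <;>
    simp only [hcdx', hcx', hQdx', hQx', hRx', Matrix.mul_apply,
      Fin.sum_univ_three, Matrix.sub_apply, Matrix.add_apply, Matrix.of_apply,
      Matrix.cons_val', Matrix.cons_val_zero, Matrix.cons_val_one,
      Matrix.head_cons, Matrix.empty_val', Matrix.cons_val_fin_one,
      Matrix.head_fin_const, Matrix.diagonal_apply] <;>
    simp [Matrix.vecHead, Matrix.vecTail, Function.comp] <;> ring
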